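/- Let Δ_{5,2} ⊂ ℝ^5 be the hypersimplex with vertices Λ_{pq} = e_p + e_q, 1 ≤ p < q ≤ 5, and let {i,j} and {k,l} be disjoint two-element subsets of {1,…,5}. Let P_{ij} be the convex hull of {Λ_{ij}} ∪ {Λ_{im}, Λ_{jm} : m ∉ {i,j}}, let P_{kl} be defined analogously, and let K_{ij,kl} be the convex hull of the eight vertices {Λ_{pq} : {p,q} ∉ {{i,j},{k,l}}}. Then P_{ij} ∪ K_{ij,kl} ∪ P_{kl} = Δ_{5,2} and the relative interiors (within the affine hyperplane x_1+⋯+x_5 = 2) of P_{ij}, K_{ij,kl}, P_{kl} are pairwise disjoint; that is, the triple {P_{ij}, K_{ij,kl}, P_{kl}} is a polyhedral decomposition of Δ_{5,2}. -/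

import Mathlib

/-! The functional `x ↦ x_a + x_b` is `≥ 1` on `P_{ab}` and `≤ 1` at every vertex `Λ_{pq}` with
`{p, q} ≠ {a, b}`. So the hyperplane `x_i + x_j = 1` separates `P_{ij}` from the other two pieces
and `x_k + x_l = 1` separates `K_{ij,kl}` from `P_{kl}`; since each piece also has a vertex strictly
off the hyperplane, its relative interior misses the hyperplane. Conversely a point `x` of
`Δ_{5,2}` lies in `P_{ij}` if `x_i + x_j ≥ 1`, in `P_{kl}` if `x_k + x_l ≥ 1`, and in `K_{ij,kl}`
otherwise, each time by an explicit convex combination of vertices. -/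

/-- The vertex `Λ_{pq} = e_p + e_q` of the hypersimplex `Δ_{5,2} ⊂ ℝ⁵`. -/
noncomputable def Lam (p q : Fin 5) : EuclideanSpace ℝ (Fin 5) :=
  EuclideanSpace.single p 1 + EuclideanSpace.single q 1

/-- The hypersimplex `Δ_{5,2}`: the convex hull of the ten points `Λ_{pq}`, `p ≠ q`. -/
noncomputable def hyperSimplex52 : Set (EuclideanSpace ℝ (Fin 5)) :=
  convexHull ℝ {x | ∃ p q : Fin 5, p ≠ q ∧ x = Lam p q}

/-- The seven-sided pyramid `P_{ij}` with apex `Λ_{ij}`: the convex hull of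
`{Λ_{ij}} ∪ {Λ_{im}, Λ_{jm} : m ∉ {i,j}}`. -/
noncomputable def pyramidP (i j : Fin 5) : Set (EuclideanSpace ℝ (Fin 5)) :=
  convexHull ℝ {x | x = Lam i j ∨ ∃ m, m ≠ i ∧ m ≠ j ∧ (x = Lam i m ∨ x = Lam j m)}

/-- The polytope `K_{ij,kl}` on the eight vertices `{Λ_{pq} : {p,q} ∉ {{i,j},{k,l}}}`. -/
noncomputable def polytopeK2 (i j k l : Fin 5) : Set (EuclideanSpace ℝ (Fin 5)) :=
  convexHull ℝ
    {x | ∃ p q : Fin 5, p ≠ q ∧ ({p, q} : Set (Fin 5)) ≠ ({i, j} : Set (Fin 5)) ∧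
      ({p, q} : Set (Fin 5)) ≠ ({k, l} : Set (Fin 5)) ∧ x = Lam p q}


open Filter Topology

section Separation

variable {E : Type*} [AddCommGroup E] [Module ℝ E] [TopologicalSpace E]
  [IsTopologicalAddGroup E] [ContinuousSMul ℝ E]

/-- If `f x = c`, the line from `y₀` through `x` stays in `s` a little beyond `x`, because `x` is
interior relative to the affine span; there `f` drops below `c`. -/
theorem lt_of_mem_intrinsicInterior {s : Set E} (f : E →ₗ[ℝ] ℝ) {c : ℝ}
    (hs : s ⊆ {y | c ≤ f y}) {y₀ : E} (hy₀ : y₀ ∈ s) (hy₀c : c < f y₀)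
    {x : E} (hx : x ∈ intrinsicInterior ℝ s) : c < f x := by
  obtain ⟨z, hz, rfl⟩ := mem_intrinsicInterior.1 hx
  refine (hs (intrinsicInterior_subset hx)).lt_of_ne fun hzc => ?_
  let γ : ℝ → affineSpan ℝ s := fun t =>
    ⟨AffineMap.lineMap y₀ z t, AffineMap.lineMap_mem _ (subset_affineSpan ℝ s hy₀) z.2⟩
  have hγ : Continuous γ := AffineMap.lineMap_continuous.subtype_mk _
  have hγ1 : γ 1 = z := Subtype.ext (AffineMap.lineMap_apply_one _ _)
  have hbeyond : ∀ᶠ t in 𝓝[>] (1 : ℝ), AffineMap.lineMap y₀ (z : E) t ∈ s :=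
    nhdsWithin_le_nhds <| hγ.continuousAt.preimage_mem_nhds <| by
      rw [hγ1]
      exact mem_of_superset (isOpen_interior.mem_nhds hz) interior_subset
  obtain ⟨t, hts, ht1⟩ := (hbeyond.and self_mem_nhdsWithin).exists
  have := hs hts
  rw [Set.mem_ofPred_eq, AffineMap.lineMap_apply_module, map_add, map_smul, map_smul, ← hzc,
    smul_eq_mul, smul_eq_mul] at this
  nlinarith [show (1 : ℝ) < t from ht1]

theorem disjoint_intrinsicInterior_of_separating {s t : Set E} (f : E →ₗ[ℝ] ℝ) {c : ℝ}
    (hs : s ⊆ {y | c ≤ f y}) (ht : t ⊆ {y | f y ≤ c}) (hs' : ∃ y ∈ s, c < f y)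
    (ht' : ∃ y ∈ t, f y < c) :
    Disjoint (intrinsicInterior ℝ s) (intrinsicInterior ℝ t) := by
  obtain ⟨ys, hys, hcys⟩ := hs'
  obtain ⟨yt, hyt, hcyt⟩ := ht'
  refine Set.disjoint_left.2 fun x hxs hxt => ?_
  have h₁ := lt_of_mem_intrinsicInterior f hs hys hcys hxs
  have h₂ := lt_of_mem_intrinsicInterior (-f) (c := -c)
    (fun _ hy => show -c ≤ -f _ from neg_le_neg (ht hy)) hyt (neg_lt_neg hcyt) hxt
  simp only [LinearMap.neg_apply, neg_lt_neg_iff] at h₂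
  linarith

end Separation

theorem exists_perm_fin_five {i j k l : Fin 5} (hij : i ≠ j) (hkl : k ≠ l) (hik : i ≠ k)
    (hil : i ≠ l) (hjk : j ≠ k) (hjl : j ≠ l) :
    ∃ σ : Equiv.Perm (Fin 5), σ 0 = i ∧ σ 1 = j ∧ σ 2 = k ∧ σ 3 = l := by
  obtain ⟨m, hmi, hmj, hmk, hml⟩ : ∃ m, m ≠ i ∧ m ≠ j ∧ m ≠ k ∧ m ≠ l := by
    revert i j k l; decide
  have hinj : Function.Injective ![i, j, k, l, m] := by
    intro a b h
    fin_cases a <;> fin_cases b <;> simp_all [eq_comm]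
  exact ⟨Equiv.ofBijective _ hinj.bijective_of_finite, rfl, rfl, rfl, rfl⟩

theorem exists_perm_fin_five_of_ne {i j : Fin 5} (hij : i ≠ j) :
    ∃ σ : Equiv.Perm (Fin 5), σ 0 = i ∧ σ 1 = j := by
  obtain ⟨k, l, hkl, hik, hil, hjk, hjl⟩ :
      ∃ k l, k ≠ l ∧ i ≠ k ∧ i ≠ l ∧ j ≠ k ∧ j ≠ l := by
    revert i j; decide
  obtain ⟨σ, hσ0, hσ1, -, -⟩ := exists_perm_fin_five hij hkl hik hil hjk hjl
  exact ⟨σ, hσ0, hσ1⟩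

theorem Lam_apply (p q c : Fin 5) :
    Lam p q c = (if c = p then (1 : ℝ) else 0) + (if c = q then 1 else 0) := by
  simp [Lam]

noncomputable def pairSum {ι : Type*} (a b : ι) : EuclideanSpace ℝ ι →ₗ[ℝ] ℝ :=
  (EuclideanSpace.proj a + EuclideanSpace.proj b : EuclideanSpace ℝ ι →L[ℝ] ℝ).toLinearMap

@[simp]
theorem pairSum_apply {ι : Type*} (a b : ι) (x : EuclideanSpace ℝ ι) :
    pairSum a b x = x a + x b :=
  rfl

theorem sum_eq_two_and_mem_Icc_of_mem_hyperSimplex52 {x : EuclideanSpace ℝ (Fin 5)}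
    (hx : x ∈ hyperSimplex52) : ∑ c, x c = 2 ∧ ∀ c, x c ∈ Set.Icc (0 : ℝ) 1 := by
  refine convexHull_min (t := {x | ∑ c, x c = 2 ∧ ∀ c, x c ∈ Set.Icc (0 : ℝ) 1}) ?_ ?_ hx
  · rintro _ ⟨p, q, hpq, rfl⟩
    refine ⟨by norm_num [Lam_apply, Finset.sum_add_distrib], fun c => ?_⟩
    simp only [Lam_apply, Set.mem_Icc]
    split_ifs <;> simp_all
  · have hsum : IsLinearMap ℝ fun x : EuclideanSpace ℝ (Fin 5) => ∑ c, x c :=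
      ⟨fun x y => by simp [Finset.sum_add_distrib], fun a x => by simp [Finset.mul_sum]⟩
    rw [Set.ofPred_and, Set.ofPred_forall]
    exact (convex_hyperplane hsum 2).inter
      (convex_iInter fun c => (convex_Icc (0 : ℝ) 1).is_linear_preimage
        (EuclideanSpace.proj c : EuclideanSpace ℝ (Fin 5) →L[ℝ] ℝ).toLinearMap.isLinear)

theorem Lam_mem_pyramidP (i j : Fin 5) : Lam i j ∈ pyramidP i j :=
  subset_convexHull ℝ _ (Or.inl rfl)

theorem Lam_mem_polytopeK2 {i j k l p q : Fin 5} (hpq : p ≠ q)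
    (hij : ({p, q} : Set (Fin 5)) ≠ {i, j}) (hkl : ({p, q} : Set (Fin 5)) ≠ {k, l}) :
    Lam p q ∈ polytopeK2 i j k l :=
  subset_convexHull ℝ _ ⟨p, q, hpq, hij, hkl, rfl⟩

theorem pyramidP_subset_hyperSimplex52 {i j : Fin 5} (hij : i ≠ j) :
    pyramidP i j ⊆ hyperSimplex52 := by
  refine convexHull_mono ?_
  rintro _ (rfl | ⟨m, hmi, hmj, rfl | rfl⟩)
  exacts [⟨i, j, hij, rfl⟩, ⟨i, m, hmi.symm, rfl⟩, ⟨j, m, hmj.symm, rfl⟩]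

theorem polytopeK2_subset_hyperSimplex52 (i j k l : Fin 5) :
    polytopeK2 i j k l ⊆ hyperSimplex52 :=
  convexHull_mono fun _ ⟨p, q, hpq, _, _, hx⟩ => ⟨p, q, hpq, hx⟩

theorem pyramidP_subset_one_le_pairSum {i j : Fin 5} (hij : i ≠ j) :
    pyramidP i j ⊆ {y | 1 ≤ pairSum i j y} := by
  refine convexHull_min ?_ (convex_halfSpace_ge (pairSum i j).isLinear 1)
  rintro _ (rfl | ⟨m, hmi, hmj, rfl | rfl⟩)
  · simp [Lam_apply, hij, hij.symm]
  all_goals simp [Lam_apply, hij, hij.symm, hmi.symm, hmj.symm]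

theorem pairSum_Lam_le_one {a b p q : Fin 5} (hab : a ≠ b) (hpq : p ≠ q)
    (hne : ({p, q} : Set (Fin 5)) ≠ {a, b}) : pairSum a b (Lam p q) ≤ 1 := by
  rw [Ne, Set.pair_eq_pair_iff] at hne
  simp only [pairSum_apply, Lam_apply]
  split_ifs <;> grind

theorem convexHull_subset_pairSum_le_one {a b : Fin 5} (hab : a ≠ b)
    {s : Set (EuclideanSpace ℝ (Fin 5))}
    (hs : ∀ v ∈ s, ∃ p q, p ≠ q ∧ ({p, q} : Set (Fin 5)) ≠ {a, b} ∧ v = Lam p q) :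
    convexHull ℝ s ⊆ {y | pairSum a b y ≤ 1} := by
  refine convexHull_min ?_ (convex_halfSpace_le (pairSum a b).isLinear 1)
  intro v hv
  obtain ⟨p, q, hpq, hne, rfl⟩ := hs v hv
  exact pairSum_Lam_le_one hab hpq hne

theorem pyramidP_subset_pairSum_le_one {i j k l : Fin 5} (hij : i ≠ j) (hkl : k ≠ l)
    (hik : i ≠ k) (hil : i ≠ l) (hjk : j ≠ k) (hjl : j ≠ l) :
    pyramidP k l ⊆ {y | pairSum i j y ≤ 1} := by
  refine convexHull_subset_pairSum_le_one hij ?_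
  rintro _ (rfl | ⟨m, hmk, hml, rfl | rfl⟩)
  exacts [⟨k, l, hkl, by simp [Set.pair_eq_pair_iff, hik.symm, hjk.symm], rfl⟩,
    ⟨k, m, hmk.symm, by simp [Set.pair_eq_pair_iff, hik.symm, hjk.symm], rfl⟩,
    ⟨l, m, hml.symm, by simp [Set.pair_eq_pair_iff, hil.symm, hjl.symm], rfl⟩]

theorem polytopeK2_subset_pairSum_le_one_left (i j k l : Fin 5) (hij : i ≠ j) :
    polytopeK2 i j k l ⊆ {y | pairSum i j y ≤ 1} :=
  convexHull_subset_pairSum_le_one hij fun _ ⟨p, q, hpq, hne, _, hv⟩ => ⟨p, q, hpq, hne, hv⟩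

theorem polytopeK2_subset_pairSum_le_one_right (i j k l : Fin 5) (hkl : k ≠ l) :
    polytopeK2 i j k l ⊆ {y | pairSum k l y ≤ 1} :=
  convexHull_subset_pairSum_le_one hkl fun _ ⟨p, q, hpq, _, hne, hv⟩ => ⟨p, q, hpq, hne, hv⟩

theorem disjoint_intrinsicInterior_pyramidP {a b : Fin 5} (hab : a ≠ b)
    {t : Set (EuclideanSpace ℝ (Fin 5))} (ht : t ⊆ {y | pairSum a b y ≤ 1})
    (ht' : ∃ y ∈ t, pairSum a b y < 1) :
    Disjoint (intrinsicInterior ℝ (pyramidP a b)) (intrinsicInterior ℝ t) :=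
  disjoint_intrinsicInterior_of_separating (pairSum a b) (pyramidP_subset_one_le_pairSum hab) ht
    ⟨_, Lam_mem_pyramidP a b, by simp [Lam_apply, hab, hab.symm]⟩ ht'

theorem eq_Lam_of_add_eq_two {i j : Fin 5} (hij : i ≠ j) {x : EuclideanSpace ℝ (Fin 5)}
    (hsum : ∑ c, x c = 2) (hx : ∀ c, x c ∈ Set.Icc (0 : ℝ) 1) (hij2 : x i + x j = 2) :
    x = Lam i j := by
  obtain ⟨σ, rfl, rfl⟩ := exists_perm_fin_five_of_ne hij
  rw [← Equiv.sum_comp σ, Fin.sum_univ_five] at hsum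
  have h0 : x (σ 0) = 1 := by linarith [(hx (σ 0)).2, (hx (σ 1)).2]
  have h1 : x (σ 1) = 1 := by linarith [(hx (σ 0)).2, (hx (σ 1)).2]
  ext c
  obtain ⟨t, rfl⟩ := σ.surjective c
  fin_cases t <;> simp [Lam_apply, h0, h1] <;>
    linarith [(hx (σ 2)).1, (hx (σ 3)).1, (hx (σ 4)).1]

theorem mem_pyramidP {i j : Fin 5} (hij : i ≠ j) {x : EuclideanSpace ℝ (Fin 5)}
    (hsum : ∑ c, x c = 2) (hx : ∀ c, x c ∈ Set.Icc (0 : ℝ) 1) (hij1 : 1 ≤ x i + x j) :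
    x ∈ pyramidP i j := by
  rcases (show x i + x j ≤ 2 by linarith [(hx i).2, (hx j).2]).eq_or_lt with hij2 | hlt
  · exact eq_Lam_of_add_eq_two hij hsum hx hij2 ▸ Lam_mem_pyramidP i j
  obtain ⟨σ, rfl, rfl⟩ := exists_perm_fin_five_of_ne hij
  rw [← Equiv.sum_comp σ, Fin.sum_univ_five] at hsum
  set d := 2 - x (σ 0) - x (σ 1)
  have hd : 0 < d := by linarith
  -- `x = (x_i + x_j - 1) Λ_{ij} + d y`, where `y` lies on the base of the pyramid and is the
  -- product of the distribution `(1 - x_j, 1 - x_i) / d` on `{i, j}` and `(x_c) / d` on the rest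
  set w := ![x (σ 0) + x (σ 1) - 1, x (σ 2) * (1 - x (σ 1)) / d, x (σ 3) * (1 - x (σ 1)) / d,
    x (σ 4) * (1 - x (σ 1)) / d, x (σ 2) * (1 - x (σ 0)) / d, x (σ 3) * (1 - x (σ 0)) / d,
    x (σ 4) * (1 - x (σ 0)) / d]
  set z := ![Lam (σ 0) (σ 1), Lam (σ 0) (σ 2), Lam (σ 0) (σ 3), Lam (σ 0) (σ 4),
    Lam (σ 1) (σ 2), Lam (σ 1) (σ 3), Lam (σ 1) (σ 4)]
  have hxwz : x = ∑ t, w t • z t := by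
    ext c
    obtain ⟨t, rfl⟩ := σ.surjective c
    fin_cases t <;> simp [w, z, Fin.sum_univ_succ, Lam_apply] <;> field_simp
    · linear_combination (x (σ 1) - 1) * hsum
    · linear_combination (x (σ 0) - 1) * hsum
    all_goals ring
  rw [hxwz]
  refine (convex_convexHull ℝ _).sum_mem (fun t _ => ?_) ?_
    fun t _ => subset_convexHull ℝ _ ?_
  · fin_cases t <;> simp [w] <;> first
      | linarith
      | exact div_nonneg (mul_nonneg (hx _).1 (sub_nonneg.2 (hx _).2)) hd.le
  · simp [w, Fin.sum_univ_succ]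
    field_simp
    linear_combination d * hsum
  · fin_cases t <;> first
      | exact Or.inl rfl
      | exact Or.inr ⟨_, by simp, by simp, Or.inl rfl⟩
      | exact Or.inr ⟨_, by simp, by simp, Or.inr rfl⟩

theorem mem_polytopeK2 {i j k l : Fin 5} (hij : i ≠ j) (hkl : k ≠ l) (hik : i ≠ k)
    (hil : i ≠ l) (hjk : j ≠ k) (hjl : j ≠ l) {x : EuclideanSpace ℝ (Fin 5)}
    (hsum : ∑ c, x c = 2) (hx : ∀ c, x c ∈ Set.Icc (0 : ℝ) 1) (hij1 : x i + x j < 1)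
    (hkl1 : x k + x l < 1) : x ∈ polytopeK2 i j k l := by
  obtain ⟨σ, rfl, rfl, rfl, rfl⟩ := exists_perm_fin_five hij hkl hik hil hjk hjl
  rw [← Equiv.sum_comp σ, Fin.sum_univ_five] at hsum
  set A := x (σ 0) + x (σ 1)
  set B := x (σ 2) + x (σ 3)
  have hA : 0 < A := by linarith [(hx (σ 4)).2]
  have hB : 0 < B := by linarith [(hx (σ 4)).2]
  set T := A + B - 1
  have hT : 0 ≤ T := by linarith [(hx (σ 4)).2]
  -- the edges to `m = σ 4` carry `1 - B` from `{i, j}` and `1 - A` from `{k, l}`, split in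
  -- proportion to the coordinates; the rest `T` goes to `{i, j} × {k, l}` as a product
  set w := ![T * x (σ 0) * x (σ 2) / (A * B), T * x (σ 0) * x (σ 3) / (A * B),
    T * x (σ 1) * x (σ 2) / (A * B), T * x (σ 1) * x (σ 3) / (A * B),
    x (σ 0) * (1 - B) / A, x (σ 1) * (1 - B) / A, x (σ 2) * (1 - A) / B, x (σ 3) * (1 - A) / B]
  set z := ![Lam (σ 0) (σ 2), Lam (σ 0) (σ 3), Lam (σ 1) (σ 2), Lam (σ 1) (σ 3),
    Lam (σ 0) (σ 4), Lam (σ 1) (σ 4), Lam (σ 2) (σ 4), Lam (σ 3) (σ 4)]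
  have hxwz : x = ∑ t, w t • z t := by
    ext c
    obtain ⟨t, rfl⟩ := σ.surjective c
    fin_cases t <;> simp [w, z, Fin.sum_univ_succ, Lam_apply] <;> field_simp
    on_goal 5 => linear_combination A * B * hsum
    all_goals ring
  rw [hxwz]
  refine (convex_convexHull ℝ _).sum_mem (fun t _ => ?_) ?_
    fun t _ => subset_convexHull ℝ _ ?_
  · fin_cases t <;> simp [w] <;> first
      | exact div_nonneg (mul_nonneg (mul_nonneg hT (hx _).1) (hx _).1) (mul_pos hA hB).le
      | exact div_nonneg (mul_nonneg (hx _).1 (by linarith)) hA.le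
      | exact div_nonneg (mul_nonneg (hx _).1 (by linarith)) hB.le
  · simp [w, Fin.sum_univ_succ]
    field_simp
    ring
  · fin_cases t <;>
      exact ⟨_, _, by simp, by simp [Set.pair_eq_pair_iff], by simp [Set.pair_eq_pair_iff], rfl⟩

theorem pyramidP_union_polytopeK2_union_pyramidP {i j k l : Fin 5} (hij : i ≠ j) (hkl : k ≠ l)
    (hik : i ≠ k) (hil : i ≠ l) (hjk : j ≠ k) (hjl : j ≠ l) :
    pyramidP i j ∪ polytopeK2 i j k l ∪ pyramidP k l = hyperSimplex52 := by
  refine subset_antisymm (Set.union_subset (Set.union_subset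
    (pyramidP_subset_hyperSimplex52 hij) (polytopeK2_subset_hyperSimplex52 i j k l))
    (pyramidP_subset_hyperSimplex52 hkl)) ?_
  intro x hx
  obtain ⟨hsum, hx01⟩ := sum_eq_two_and_mem_Icc_of_mem_hyperSimplex52 hx
  by_cases hij1 : 1 ≤ x i + x j
  · exact .inl (.inl (mem_pyramidP hij hsum hx01 hij1))
  by_cases hkl1 : 1 ≤ x k + x l
  · exact .inr (mem_pyramidP hkl hsum hx01 hkl1)
  exact .inl (.inr (mem_polytopeK2 hij hkl hik hil hjk hjl hsum hx01 (not_le.1 hij1)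
    (not_le.1 hkl1)))

/-- For disjoint two-element subsets `{i,j}` and `{k,l}` of `{1,…,5}`,
the triple `{P_{ij}, K_{ij,kl}, P_{kl}}` is a polyhedral decomposition of `Δ_{5,2}`:
the union is `Δ_{5,2}` and the relative (intrinsic) interiors are pairwise disjoint. -/
theorem statement15 (i j k l : Fin 5) (hij : i ≠ j) (hkl : k ≠ l)
    (hik : i ≠ k) (hil : i ≠ l) (hjk : j ≠ k) (hjl : j ≠ l) :
    pyramidP i j ∪ polytopeK2 i j k l ∪ pyramidP k l = hyperSimplex52 ∧
    Disjoint (intrinsicInterior ℝ (pyramidP i j)) (intrinsicInterior ℝ (polytopeK2 i j k l)) ∧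
    Disjoint (intrinsicInterior ℝ (pyramidP i j)) (intrinsicInterior ℝ (pyramidP k l)) ∧
    Disjoint (intrinsicInterior ℝ (polytopeK2 i j k l)) (intrinsicInterior ℝ (pyramidP k l)) := by
  refine ⟨pyramidP_union_polytopeK2_union_pyramidP hij hkl hik hil hjk hjl, ?_, ?_, ?_⟩
  all_goals obtain ⟨σ, rfl, rfl, rfl, rfl⟩ := exists_perm_fin_five hij hkl hik hil hjk hjl
  · exact disjoint_intrinsicInterior_pyramidP hij
      (polytopeK2_subset_pairSum_le_one_left _ _ _ _ hij)
      ⟨Lam (σ 2) (σ 4), Lam_mem_polytopeK2 (by simp) (by simp [Set.pair_eq_pair_iff])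
        (by simp [Set.pair_eq_pair_iff]), by simp [Lam_apply]⟩
  · exact disjoint_intrinsicInterior_pyramidP hij
      (pyramidP_subset_pairSum_le_one hij hkl hik hil hjk hjl)
      ⟨_, Lam_mem_pyramidP _ _, by simp [Lam_apply]⟩
  · exact (disjoint_intrinsicInterior_pyramidP hkl
      (polytopeK2_subset_pairSum_le_one_right _ _ _ _ hkl)
      ⟨Lam (σ 0) (σ 4), Lam_mem_polytopeK2 (by simp) (by simp [Set.pair_eq_pair_iff])
        (by simp [Set.pair_eq_pair_iff]), by simp [Lam_apply]⟩).symm
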